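/- arXiv:1409.7081 — 4 statements merged into one kernel-verified Lean document; each statement's English description precedes it below -/
import Mathlib

section
/- Let A be a self-adjoint operator on a complex Hilbert space Z with compact resolvent, b ∈ Z nonzero, and suppose the eigenvalue branch k ↦ (f(k), x(k)) of A - k b⟨·,b⟩ is differentiable with ‖x(k)‖ = 1 for all k. Then f'(k) = -|⟨x(k), b⟩|², so f is nonincreasing in k; in particular each branch of the root locus of a collocated self-adjoint system moves to the left. -/
/-!
Taking the inner product of the eigen-equation at `s` with `x k`, and moving `A` across by
symmetry onto the eigen-equation at `k`, gives the exact identity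
`(f s - f k) ⟪x k, x s⟫ = (k - s) ⟪x k, b⟫ ⟪b, x s⟫`.
Differentiating both sides at `s = k`, where `⟪x k, x k⟫ = 1`, yields `f' k = -‖⟪b, x k⟫‖ ^ 2`.
-/

open scoped InnerProductSpace

section RankOnePerturbation

variable {𝕜 E : Type*} [RCLike 𝕜] [NormedAddCommGroup E] [InnerProductSpace 𝕜 E]

theorem LinearMap.IsSymmetric.eigenvalue_sub_smul_inner_eq {A : E →ₗ[𝕜] E} (hA : A.IsSymmetric)
    (b : E) {s t μ ν : ℝ} {u v : E}
    (hu : A u - (s : 𝕜) • ⟪b, u⟫_𝕜 • b = (μ : 𝕜) • u)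
    (hv : A v - (t : 𝕜) • ⟪b, v⟫_𝕜 • b = (ν : 𝕜) • v) :
    (μ - ν) • ⟪v, u⟫_𝕜 = (t - s) • (⟪v, b⟫_𝕜 * ⟪b, u⟫_𝕜) := by
  have hAu : A u = (μ : 𝕜) • u + (s : 𝕜) • ⟪b, u⟫_𝕜 • b := by rw [← hu, sub_add_cancel]
  have hAv : A v = (ν : 𝕜) • v + (t : 𝕜) • ⟪b, v⟫_𝕜 • b := by rw [← hv, sub_add_cancel]
  have hsymm := hA v u
  rw [hAu, hAv] at hsymm
  simp only [inner_add_left, inner_add_right, inner_smul_left, inner_smul_right,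
    RCLike.conj_ofReal, inner_conj_symm] at hsymm
  simp only [RCLike.real_smul_eq_coe_mul, RCLike.ofReal_sub]
  linear_combination -hsymm

theorem hasDerivAt_eigenvalue_branch [NormedSpace ℝ E] {A : E →ₗ[𝕜] E} (hA : A.IsSymmetric)
    (b : E) {f : ℝ → ℝ} {x : ℝ → E} {k : ℝ} (hf : DifferentiableAt ℝ f k)
    (hx : DifferentiableAt ℝ x k) (hxk : ‖x k‖ = 1)
    (heig : ∀ s : ℝ, A (x s) - (s : 𝕜) • ⟪b, x s⟫_𝕜 • b = (f s : 𝕜) • x s) :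
    HasDerivAt f (-‖⟪b, x k⟫_𝕜‖ ^ 2) k := by
  obtain ⟨f', hf'⟩ : ∃ f', HasDerivAt f f' k := ⟨_, hf.hasDerivAt⟩
  have hpair (s : ℝ) : (f s - f k) • ⟪x k, x s⟫_𝕜 = (k - s) • (⟪x k, b⟫_𝕜 * ⟪b, x s⟫_𝕜) :=
    hA.eigenvalue_sub_smul_inner_eq b (heig s) (heig k)
  have hx' := hx.hasDerivAt
  have hlhs := (hf'.sub_const (f k)).smul ((hasDerivAt_const k (x k)).inner 𝕜 hx')
  have hrhs := ((hasDerivAt_id k).const_sub k).smul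
    (((hasDerivAt_const k b).inner 𝕜 hx').const_mul ⟪x k, b⟫_𝕜)
  have key : (f' : 𝕜) = -(⟪x k, b⟫_𝕜 * ⟪b, x k⟫_𝕜) := by
    simpa [inner_self_eq_norm_sq_to_K, hxk, RCLike.real_smul_eq_coe_mul] using
      hlhs.unique (hrhs.congr_of_eventuallyEq (.of_forall hpair))
  rw [← inner_conj_symm, RCLike.conj_mul] at key
  convert hf'
  exact_mod_cast key.symm

end RankOnePerturbation

theorem stmt5_general {Z : Type*} [NormedAddCommGroup Z] [InnerProductSpace ℂ Z]
    (A : Z →ₗ[ℂ] Z) (hA : ∀ x y : Z, ⟪A x, y⟫_ℂ = ⟪x, A y⟫_ℂ)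
    (b : Z)
    (f : ℝ → ℝ) (x : ℝ → Z)
    (hf : Differentiable ℝ f) (hx : Differentiable ℝ x)
    (hnorm : ∀ k : ℝ, ‖x k‖ = 1)
    (heig : ∀ k : ℝ, A (x k) - (k : ℂ) • ⟪b, x k⟫_ℂ • b = (f k : ℂ) • x k) :
    (∀ k : ℝ, deriv f k = -‖⟪b, x k⟫_ℂ‖ ^ 2) ∧ Antitone f := by
  have hderiv (k : ℝ) := hasDerivAt_eigenvalue_branch hA b (hf k) (hx k) (hnorm k) heig
  refine ⟨fun k => (hderiv k).deriv, antitone_of_deriv_nonpos hf fun k => ?_⟩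
  rw [(hderiv k).deriv]
  exact neg_nonpos.2 (sq_nonneg _)

/-- For a collocated self-adjoint system, along a differentiable eigenvalue
branch `k ↦ (f k, x k)` of `A - k B B*` with unit eigenvectors, `f'(k) = -|⟨x(k), b⟩|²`;
in particular `f` is nonincreasing: each branch of the root locus moves to the left. -/
theorem stmt5 {Z : Type*} [NormedAddCommGroup Z] [InnerProductSpace ℂ Z]
    (A : Z →ₗ[ℂ] Z) (hA : ∀ x y : Z, ⟪A x, y⟫_ℂ = ⟪x, A y⟫_ℂ)
    (b : Z) (hb : b ≠ 0)
    (f : ℝ → ℝ) (x : ℝ → Z)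
    (hf : Differentiable ℝ f) (hx : Differentiable ℝ x)
    (hnorm : ∀ k : ℝ, ‖x k‖ = 1)
    (heig : ∀ k : ℝ, A (x k) - (k : ℂ) • ⟪b, x k⟫_ℂ • b = (f k : ℂ) • x k) :
    (∀ k : ℝ, deriv f k = -‖⟪b, x k⟫_ℂ‖ ^ 2) ∧ Antitone f :=
  stmt5_general A hA b f x hf hx hnorm heig
end

section
/- Let A be an operator on a complex Hilbert space, b, c ∈ Z with ⟨b, c⟩ ≠ 0, and A∞ z = A z - (⟨A z, c⟩/⟨b, c⟩) b. Suppose μ ∈ ρ(A) and z = (μ I - A)⁻¹ b satisfies ⟨z, c⟩ = 0 (i.e. μ is a transmission zero). Then z ∈ c^⊥, z ≠ 0, and A∞ z = μ z, so μ is an eigenvalue of A∞ restricted to c^⊥. -/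
open scoped InnerProductSpace

/-- If `μ ∈ ρ(A)` with resolvent `R`, `b ≠ 0`, and `z = (μI - A)⁻¹ b`
satisfies `⟨z, c⟩ = 0` (i.e. `μ` is a transmission zero), then `z ∈ c^⊥`, `z ≠ 0`, and
`A∞ z = μ z`: `μ` is an eigenvalue of `A∞` restricted to `c^⊥`. -/
theorem stmt8 {Z : Type*} [NormedAddCommGroup Z] [InnerProductSpace ℂ Z]
    (A : Z →ₗ[ℂ] Z) (b c : Z) (hb : b ≠ 0) (hbc : ⟪c, b⟫_ℂ ≠ 0)
    (μ : ℂ) (R : Z →L[ℂ] Z)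
    (hR1 : ∀ z : Z, R (μ • z - A z) = z)
    (hR2 : ∀ z : Z, μ • R z - A (R z) = z)
    (hzero : ⟪c, R b⟫_ℂ = 0) :
    ⟪c, R b⟫_ℂ = 0 ∧ R b ≠ 0 ∧
      A (R b) - (⟪c, A (R b)⟫_ℂ / ⟪c, b⟫_ℂ) • b = μ • R b := by
  have hAz : A (R b) = μ • R b - b := by
    have := hR2 b
    linear_combination (norm := module) -this
  refine ⟨hzero, ?_, ?_⟩
  · intro h
    have := hR2 b
    rw [h] at this
    simp at this
    exact hb this.symm
  · have hc : ⟪c, A (R b)⟫_ℂ = -⟪c, b⟫_ℂ := by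
      rw [hAz, inner_sub_right, inner_smul_right, hzero]
      ring
    rw [hc, hAz, neg_div, div_self hbc]
    module
end

section
/- Let A be a skew-adjoint operator on a complex Hilbert space and b ∈ Z. Suppose μ_n, μ_m are distinct purely imaginary numbers in ρ(A) that are transmission zeros, i.e. ⟨(μ_n I - A)⁻¹ b, b⟩ = 0 and ⟨(μ_m I - A)⁻¹ b, b⟩ = 0. Then the vectors (μ_n I - A)⁻¹ b and (μ_m I - A)⁻¹ b are orthogonal. -/
open scoped InnerProductSpace

/-- For a skew-adjoint `A` and distinct purely imaginary `μ_n ≠ μ_m` in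
`ρ(A)` that are transmission zeros (`⟨(μ I - A)⁻¹ b, b⟩ = 0`), the vectors
`(μ_n I - A)⁻¹ b` and `(μ_m I - A)⁻¹ b` are orthogonal. -/
theorem stmt11 {Z : Type*} [NormedAddCommGroup Z] [InnerProductSpace ℂ Z]
    (A : Z →ₗ[ℂ] Z) (hA : ∀ x y : Z, ⟪A x, y⟫_ℂ = -⟪x, A y⟫_ℂ)
    (b : Z) (μn μm : ℂ) (hμn : μn.re = 0) (hμm : μm.re = 0) (hne : μn ≠ μm)
    (Rn Rm : Z →L[ℂ] Z)
    (hRn1 : ∀ z : Z, Rn (μn • z - A z) = z) (hRn2 : ∀ z : Z, μn • Rn z - A (Rn z) = z)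
    (hRm1 : ∀ z : Z, Rm (μm • z - A z) = z) (hRm2 : ∀ z : Z, μm • Rm z - A (Rm z) = z)
    (hzn : ⟪b, Rn b⟫_ℂ = 0) (hzm : ⟪b, Rm b⟫_ℂ = 0) :
    ⟪Rn b, Rm b⟫_ℂ = 0 := by
  have hconjn : (starRingEnd ℂ) μn = -μn := by
    apply Complex.ext <;> simp [hμn]
  have h1 : ⟪Rn b, b⟫_ℂ = 0 := by
    rw [← inner_conj_symm, hzn]; simp
  have hA' : ∀ x y : Z, ⟪x, A y⟫_ℂ = -⟪A x, y⟫_ℂ := fun x y => by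
    rw [hA x y, neg_neg]
  have hAn : A (Rn b) = μn • Rn b - b := by
    have h := hRn2 b
    rw [eq_sub_iff_add_eq, add_comm, ← eq_sub_iff_add_eq]
    exact h.symm
  have h2 : ⟪Rn b, b⟫_ℂ = (μm - μn) * ⟪Rn b, Rm b⟫_ℂ := by
    have hb : b = μm • Rm b - A (Rm b) := (hRm2 b).symm
    nth_rw 2 [hb]
    rw [inner_sub_right, inner_smul_right, hA', hAn, inner_sub_left,
      inner_smul_left, hconjn, hzm]
    ring
  rw [h1] at h2
  have hsub : μm - μn ≠ 0 := sub_ne_zero.mpr (Ne.symm hne)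
  exact (mul_eq_zero.mp h2.symm).resolve_left hsub
end

section
/- Let A be an operator on a complex Hilbert space whose spectrum is nonempty and consists of isolated eigenvalues of finite algebraic multiplicity, and let b, c ∈ Z define a minimal system (no invariant zero of (A,b,c) is in σ(A)). If a branch f : [0, ∞) → ℂ of the root locus (so G(f(k)) = -1/k for k > 0 and f is continuous) has two convergent subsequences f(y_l) → f_y and f(z_l) → f_z with y_l, z_l → ∞, then f_y = f_z; i.e. any bounded branch of the root locus converges to a single transmission zero. -/
open Set Filter Topology

/-!
Every limit point `w` of the branch `f` at infinity is a zero of `G` off `S`: near a pole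
`‖G‖` is large, while `G (f k) = -1/k → 0`. If the branch had two distinct limit points `fy`
and `fz`, then by the intermediate value theorem it would cross every small sphere around `fy`
infinitely often, and compactness of the sphere gives a limit point, hence a zero of `G`, on
each of them. So zeros of `G` accumulate at `fy ∉ S`; since `Sᶜ` is connected (`S` is
countable), the identity theorem forces `G = 0` on `Sᶜ`, which is impossible near a pole.
-/

lemma isClosed_of_forall_not_accPt {X : Type*} [TopologicalSpace X] {S : Set X}
    (hS : ∀ w, ¬AccPt w (𝓟 S)) : IsClosed S :=
  (isClosed_iff_derivedSet_subset S).2 fun w hw => (hS w hw).elim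

lemma nhdsNE_le_nhdsWithin_compl_of_not_accPt {X : Type*} [TopologicalSpace X] {S : Set X}
    {w : X} (hw : ¬AccPt w (𝓟 S)) : 𝓝[≠] w ≤ 𝓝[Sᶜ] w := by
  rw [accPt_iff_frequently_nhdsNE, not_frequently] at hw
  exact nhdsWithin_le_of_mem hw

lemma eventually_eq_of_tendsto_norm_atTop_nhdsNE {X E ι : Type*} [TopologicalSpace X]
    [SeminormedAddGroup E] {g : X → E} {w : X} (hg : Tendsto (‖g ·‖) (𝓝[≠] w) atTop)
    {l : Filter ι} {u : ι → X} (hu : Tendsto u l (𝓝 w)) (hgu : Tendsto (g ∘ u) l (𝓝 0)) :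
    ∀ᶠ i in l, u i = w := by
  have hbig : ∀ᶠ x in 𝓝 w, x ∈ ({w}ᶜ : Set X) → 1 < ‖g x‖ :=
    eventually_nhdsWithin_iff.1 (hg.eventually_gt_atTop 1)
  have hsmall : ∀ᶠ i in l, ‖g (u i)‖ < 1 := by
    simpa using hgu.norm.eventually (gt_mem_nhds (by simp))
  filter_upwards [hu hbig, hsmall] with i hui_big hui_small
  by_contra hne
  exact (hui_big hne).not_gt hui_small

lemma MapClusterPt.exists_mapClusterPt_dist_eq {X : Type*} [PseudoMetricSpace X] [ProperSpace X]
    {f : ℝ → X} {a : ℝ} (hf : ContinuousOn f (Ici a)) {x y : X} (hx : MapClusterPt x atTop f)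
    (hy : MapClusterPt y atTop f) {r : ℝ} (hr0 : 0 < r) (hr : r < dist y x) :
    ∃ w, dist w x = r ∧ MapClusterPt w atTop f := by
  have hcross : ∃ᶠ k in atTop, f k ∈ Metric.sphere x r := by
    refine frequently_atTop.2 fun K => ?_
    obtain ⟨s, hs, hsx⟩ :=
      frequently_atTop.1 (hx.frequently (Metric.ball_mem_nhds x hr0)) (max K a)
    obtain ⟨t, ht, hty⟩ :=
      frequently_atTop.1 (hy.frequently (Metric.ball_mem_nhds y (sub_pos.2 hr))) (max K a)
    have hsr : dist (f s) x ≤ r := (Metric.mem_ball.1 hsx).le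
    have hrt : r ≤ dist (f t) x := by
      have := dist_triangle_left y x (f t)
      linarith [Metric.mem_ball.1 hty]
    have hf' : ContinuousOn f (Ici (max K a)) := hf.mono (Ici_subset_Ici.2 (le_max_right K a))
    obtain ⟨c, hc, hcr⟩ := isPreconnected_Ici.intermediate_value hs ht
      (f := fun k => dist (f k) x) (by fun_prop) ⟨hsr, hrt⟩
    exact ⟨c, le_of_max_le_left hc, hcr⟩
  exact (isCompact_sphere x r).exists_mapClusterPt_of_frequently hcross

section RootLocus

variable {S : Set ℂ} {G : ℂ → ℂ}

lemma notMem_and_eq_zero_of_mapClusterPt (hSacc : ∀ w : ℂ, ¬AccPt w (𝓟 S))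
    (hG : DifferentiableOn ℂ G Sᶜ) (hpole : ∀ lam ∈ S, Tendsto (‖G ·‖) (𝓝[Sᶜ] lam) atTop)
    {f : ℝ → ℂ} (hGf : ∀ k : ℝ, 0 < k → G (f k) = -1 / (k : ℂ)) {w : ℂ}
    (hw : MapClusterPt w atTop f) : w ∉ S ∧ G w = 0 := by
  obtain ⟨U, hU, hfU⟩ := mapClusterPt_iff_ultrafilter.1 hw
  have hpos : ∀ᶠ k in (U : Filter ℝ), 0 < k := hU (eventually_gt_atTop 0)
  have hGfU : Tendsto (G ∘ f) U (𝓝 0) := by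
    have hinv : Tendsto (fun k : ℝ => ((k⁻¹ : ℝ) : ℂ)) U (𝓝 ((0 : ℝ) : ℂ)) :=
      (Complex.continuous_ofReal.tendsto 0).comp (tendsto_inv_atTop_zero.mono_left hU)
    refine (by simpa using hinv.neg : Tendsto _ _ _).congr' ?_
    filter_upwards [hpos] with k hk
    simp [hGf k hk, neg_div]
  have hwS : w ∉ S := by
    intro hwS
    have hfw := eventually_eq_of_tendsto_norm_atTop_nhdsNE
      ((hpole w hwS).mono_left (nhdsNE_le_nhdsWithin_compl_of_not_accPt (hSacc w))) hfU hGfU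
    obtain ⟨k, hk, hkw⟩ := (hpos.and hfw).exists
    have hGw : G w = 0 :=
      tendsto_nhds_unique (tendsto_const_nhds.congr' (hfw.mono fun k h => by simp [h])) hGfU
    have := hGf k hk
    rw [hkw, hGw] at this
    exact div_ne_zero (by norm_num) (by exact_mod_cast hk.ne') this.symm
  have hGcont : ContinuousAt G w :=
    hG.continuousOn.continuousAt ((isClosed_of_forall_not_accPt hSacc).isOpen_compl.mem_nhds hwS)
  exact ⟨hwS, tendsto_nhds_unique (hGcont.tendsto.comp hfU) hGfU⟩

lemma eventually_nhdsNE_ne_zero (hSne : S.Nonempty) (hScnt : S.Countable)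
    (hSacc : ∀ w : ℂ, ¬AccPt w (𝓟 S)) (hG : DifferentiableOn ℂ G Sᶜ)
    (hpole : ∀ lam ∈ S, Tendsto (‖G ·‖) (𝓝[Sᶜ] lam) atTop) {w : ℂ} (hw : w ∉ S) :
    ∀ᶠ x in 𝓝[≠] w, G x ≠ 0 := by
  by_contra hzeros
  rw [not_eventually] at hzeros
  have hconn : IsPreconnected Sᶜ :=
    (hScnt.isConnected_compl_of_one_lt_rank (by simp [Complex.rank_real_complex])).isPreconnected
  have hG0 : EqOn G 0 Sᶜ :=
    (hG.analyticOnNhd (isClosed_of_forall_not_accPt hSacc).isOpen_compl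
      ).eqOn_zero_of_preconnected_of_frequently_eq_zero hconn hw (by simpa using hzeros)
  obtain ⟨lam, hlam⟩ := hSne
  have hbig : ∀ᶠ x in 𝓝[≠] lam, 1 < ‖G x‖ ∧ x ∈ Sᶜ :=
    (((hpole lam hlam).mono_left (nhdsNE_le_nhdsWithin_compl_of_not_accPt (hSacc lam))
      ).eventually_gt_atTop 1).and
      (nhdsNE_le_nhdsWithin_compl_of_not_accPt (hSacc lam) self_mem_nhdsWithin)
  obtain ⟨x, hx, hxS⟩ := hbig.exists
  norm_num [hG0 hxS] at hx

end RootLocus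

theorem stmt17_general (S : Set ℂ) (hSne : S.Nonempty) (hScnt : S.Countable)
    (hSacc : ∀ w : ℂ, ¬ AccPt w (Filter.principal S))
    (G : ℂ → ℂ) (hG : DifferentiableOn ℂ G Sᶜ)
    (hpole : ∀ lam ∈ S, Tendsto (fun s => ‖G s‖) (nhdsWithin lam Sᶜ) atTop)
    (f : ℝ → ℂ) (hf : ContinuousOn f (Ici 0))
    (hGf : ∀ k : ℝ, 0 < k → G (f k) = -1 / (k : ℂ))
    (y z : ℕ → ℝ)
    (hy : Tendsto y atTop atTop) (hz : Tendsto z atTop atTop)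
    (fy fz : ℂ)
    (hfy : Tendsto (fun l => f (y l)) atTop (nhds fy))
    (hfz : Tendsto (fun l => f (z l)) atTop (nhds fz)) :
    fy = fz := by
  by_contra hne
  have hcy : MapClusterPt fy atTop f := hfy.mapClusterPt.of_comp hy
  have hcz : MapClusterPt fz atTop f := hfz.mapClusterPt.of_comp hz
  have hfyS := (notMem_and_eq_zero_of_mapClusterPt hSacc hG hpole hGf hcy).1
  obtain ⟨ε, hε, hGne⟩ := Metric.eventually_nhds_iff.1
    (eventually_nhdsWithin_iff.1 (eventually_nhdsNE_ne_zero hSne hScnt hSacc hG hpole hfyS))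
  have hd : 0 < dist fz fy := dist_pos.2 (Ne.symm hne)
  obtain ⟨r, hr, hrmin⟩ := exists_between (lt_min hε hd)
  obtain ⟨hrε, hrd⟩ := lt_min_iff.1 hrmin
  obtain ⟨w, hwr, hcw⟩ := hcy.exists_mapClusterPt_dist_eq hf hcz hr hrd
  refine hGne (hwr.trans_lt hrε) ?_ (notMem_and_eq_zero_of_mapClusterPt hSacc hG hpole hGf hcw).2
  rintro rfl
  rw [dist_self] at hwr
  exact hr.ne hwr

/-- Let `S` be a nonempty countable set without finite accumulation points
(the spectrum of `A`), and `G` holomorphic off `S` with each point of `S` a pole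
(by minimality).  If `f : [0,∞) → ℂ` is a continuous root-locus branch with
`G (f k) = -1/k` for `k > 0`, and two subsequences `f (y l) → f_y`, `f (z l) → f_z` with
`y l, z l → ∞`, then `f_y = f_z`: a bounded branch converges to a single transmission
zero. -/
theorem stmt17 (S : Set ℂ) (hSne : S.Nonempty) (hScnt : S.Countable)
    (hSacc : ∀ w : ℂ, ¬ AccPt w (Filter.principal S))
    (G : ℂ → ℂ) (hG : DifferentiableOn ℂ G Sᶜ)
    (hpole : ∀ lam ∈ S, Tendsto (fun s => ‖G s‖) (nhdsWithin lam Sᶜ) atTop)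
    (f : ℝ → ℂ) (hf : ContinuousOn f (Ici 0))
    (hGf : ∀ k : ℝ, 0 < k → G (f k) = -1 / (k : ℂ))
    (y z : ℕ → ℝ) (hy0 : ∀ l, 0 < y l) (hz0 : ∀ l, 0 < z l)
    (hy : Tendsto y atTop atTop) (hz : Tendsto z atTop atTop)
    (fy fz : ℂ)
    (hfy : Tendsto (fun l => f (y l)) atTop (nhds fy))
    (hfz : Tendsto (fun l => f (z l)) atTop (nhds fz)) :
    fy = fz :=
  stmt17_general S hSne hScnt hSacc G hG hpole f hf hGf y z hy hz fy fz hfy hfz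
end
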